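/- arXiv:1503.04873 — 4 statements merged into one kernel-verified Lean document; each statement's English description precedes it below -/
import Mathlib

section
/- For all x, y ∈ P, stem(x·stem(y)) = stem(x·y). Moreover, if t, s ∈ ℕ are such that y = stem(y)·b^t and x·stem(y) = stem(x·stem(y))·b^s, then x·y = stem(x·y)·b^{s+t}. -/
open scoped Classical

namespace BSpaper

/-- The single Baumslag–Solitar relator `a * b^c * (b^d * a)⁻¹` on two generators
(`true` plays the role of `a`, `false` the role of `b`). -/
def rels (c d : ℕ) : Set (FreeGroup Bool) :=
  {FreeGroup.of true * FreeGroup.of false ^ c * (FreeGroup.of false ^ d * FreeGroup.of true)⁻¹}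

/-- The Baumslag–Solitar group `BS(c,d) = ⟨a, b ∣ a b^c = b^d a⟩`. -/
abbrev Grp (c d : ℕ) := PresentedGroup (rels c d)

variable (c d : ℕ)

/-- The generator `a`. -/
def a : Grp c d := PresentedGroup.of true

/-- The generator `b`. -/
def b : Grp c d := PresentedGroup.of false

/-- The submonoid `P` of `BS(c,d)` generated by `a` and `b`. -/
def P : Submonoid (Grp c d) := Submonoid.closure {a c d, b c d}

/-- The word `b^{s₀} a b^{s₁} a ⋯ b^{s_{k-1}} a` associated to a list of digits `s_i < d`. -/
def wordStem : List (Fin d) → Grp c d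
  | [] => 1
  | i :: l => b c d ^ (i : ℕ) * a c d * wordStem l

/-- `Σ_k`: the set of stems of height `k`. -/
def SigmaSet (k : ℕ) : Set (Grp c d) :=
  {g | ∃ l : List (Fin d), l.length = k ∧ wordStem c d l = g}

/-- The data `(l, t)` of a normal-form decomposition `x = (b^{s₀} a ⋯ b^{s_{k-1}} a) * b^t`,
chosen by choice when it exists (it exists, uniquely, for every `x ∈ P`). -/
noncomputable def nf (x : Grp c d) : List (Fin d) × ℕ :=
  if h : ∃ p : List (Fin d) × ℕ, x = wordStem c d p.1 * b c d ^ p.2 then h.choose else ([], 0)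

/-- The stem of `x`, i.e. the stem part of the normal form of `x`. -/
noncomputable def stem (x : Grp c d) : Grp c d := wordStem c d (nf c d x).1

/-- The left-invariant partial order on `BS(c,d)`: `g ≤ h` iff `g⁻¹ * h ∈ P`. -/
def bsLe (g h : Grp c d) : Prop := g⁻¹ * h ∈ P c d

lemma a_mem_P : a c d ∈ P c d := Submonoid.subset_closure (Set.mem_insert _ _)

lemma b_mem_P : b c d ∈ P c d :=
  Submonoid.subset_closure (Set.mem_insert_of_mem _ rfl)

lemma wordStem_mem_P (l : List (Fin d)) : wordStem c d l ∈ P c d := by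
  induction l with
  | nil => exact one_mem _
  | cons i l ih =>
      exact mul_mem (mul_mem (pow_mem (b_mem_P c d) _) (a_mem_P c d)) ih

/-! The normal form `x = b^{s₀} a ⋯ b^{s_{k-1}} a · b^t` of an element of `P` exists because
`b^t a = b^{t mod d} a b^{c ⌊t/d⌋}` lets every `a` absorb the `b`'s to its left modulo `d`. It is
unique because `BS(c,d)` acts on the right on Britton-reduced words `w · b^m`, and the orbit map of
the empty word sends `b^{s₀} a ⋯ a · b^t` to the reduced word with these digits. Uniqueness makes
`stem` invariant under right multiplication by powers of `b`, and `y = stem y · b^t`. -/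

lemma semiconjBy_a_b_pow : SemiconjBy (a c d) (b c d ^ c) (b c d ^ d) := by
  have h : PresentedGroup.mk (rels c d)
      (FreeGroup.of true * FreeGroup.of false ^ c *
        (FreeGroup.of false ^ d * FreeGroup.of true)⁻¹) = 1 :=
    (QuotientGroup.eq_one_iff _).2 (Subgroup.subset_normalClosure rfl)
  simp only [map_mul, map_pow, map_inv] at h
  exact mul_inv_eq_one.1 h

lemma wordStem_append_singleton (l : List (Fin d)) (i : Fin d) :
    wordStem c d (l ++ [i]) = wordStem c d l * (b c d ^ (i : ℕ) * a c d) := by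
  induction l with
  | nil => simp [wordStem]
  | cons j l ih => simp only [List.cons_append, wordStem, ih, mul_assoc]

lemma b_pow_mul_a (t : ℕ) :
    b c d ^ t * a c d = b c d ^ (t % d) * a c d * b c d ^ (c * (t / d)) := by
  conv_lhs => rw [← Nat.mod_add_div t d, pow_add, pow_mul, mul_assoc,
    ← ((semiconjBy_a_b_pow c d).pow_right (t / d)).eq, ← pow_mul]
  rw [mul_assoc]

lemma exists_eq_wordStem_mul_b_pow (hd : 0 < d) {x : Grp c d} (hx : x ∈ P c d) :
    ∃ (l : List (Fin d)) (t : ℕ), x = wordStem c d l * b c d ^ t := by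
  induction hx using Submonoid.closure_induction_right with
  | one => exact ⟨[], 0, by simp [wordStem]⟩
  | mul_right x _ g hg ih =>
    obtain ⟨l, t, rfl⟩ := ih
    rcases hg with rfl | rfl
    · refine ⟨l ++ [⟨t % d, Nat.mod_lt t hd⟩], c * (t / d), ?_⟩
      rw [wordStem_append_singleton, mul_assoc, b_pow_mul_a]
      simp only [mul_assoc]
    · exact ⟨l, t + 1, by rw [mul_assoc, pow_succ]⟩

/-- `(s, true)` stands for `b^s a` and `(s, false)` for `b^s a⁻¹`. -/
abbrev Letter := ℤ × Bool

/-- `b^(modulus e)` is the power of `b` that passes through `a^{±1}` (sign `e`), turning into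
`b^(modulus !e)`: `b^d a = a b^c` and `b^c a⁻¹ = a⁻¹ b^d`. -/
def modulus : Bool → ℤ
  | true => d
  | false => c

/-- Britton-reduced words, stored last letter first: no pinch `a^{∓1} b^0 a^{±1}`. -/
def IsReduced (w : List Letter) : Prop :=
  (∀ p ∈ w, 0 ≤ p.1 ∧ p.1 < modulus c d p.2) ∧ w.IsChain (fun p q => p.2 = q.2 ∨ p.1 ≠ 0)

/-- Right multiplication of `w · b^m` by `a` (`e = true`) or `a⁻¹` (`e = false`), followed by
reduction. -/
def push (e : Bool) : List Letter × ℤ → List Letter × ℤ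
  | ((s, e') :: w, m) =>
    if e' = !e ∧ m % modulus c d e = 0 then (w, s + modulus c d (!e) * (m / modulus c d e))
    else ((m % modulus c d e, e) :: (s, e') :: w, modulus c d (!e) * (m / modulus c d e))
  | ([], m) => ([(m % modulus c d e, e)], modulus c d (!e) * (m / modulus c d e))

def ReducedForm : Type := {x : List Letter × ℤ // IsReduced c d x.1}

variable {c d}

lemma modulus_pos (hc : 0 < c) (hd : 0 < d) (e : Bool) : 0 < modulus c d e := by
  cases e <;> simpa [modulus]

lemma push_cons_of_cancel {e e' : Bool} (he : e' = !e) {s m : ℤ} {w : List Letter}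
    (hm : m % modulus c d e = 0) :
    push c d e ((s, e') :: w, m) = (w, s + modulus c d (!e) * (m / modulus c d e)) := by
  simp [push, he, hm]

lemma push_of_not_cancel {e : Bool} {w : List Letter} {m : ℤ}
    (h : ∀ s w', w = (s, !e) :: w' → m % modulus c d e ≠ 0) :
    push c d e (w, m) = ((m % modulus c d e, e) :: w, modulus c d (!e) * (m / modulus c d e)) := by
  match w with
  | [] => rfl
  | (s, e') :: w' =>
    rw [push, if_neg]
    rintro ⟨rfl, hm⟩
    exact h s w' rfl hm

lemma isReduced_push (hc : 0 < c) (hd : 0 < d) (e : Bool) {x : List Letter × ℤ}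
    (hx : IsReduced c d x.1) : IsReduced c d (push c d e x).1 := by
  obtain ⟨w, m⟩ := x
  by_cases hcancel : ∃ s w', w = (s, !e) :: w' ∧ m % modulus c d e = 0
  · obtain ⟨s, w', rfl, hm⟩ := hcancel
    rw [push_cons_of_cancel rfl hm]
    exact ⟨fun p hp => hx.1 p (List.mem_cons_of_mem _ hp), hx.2.tail⟩
  · push Not at hcancel
    rw [push_of_not_cancel hcancel]
    have hv := modulus_pos hc hd e
    refine ⟨?_, List.isChain_cons.2 ⟨?_, hx.2⟩⟩
    · rintro p (_ | ⟨_, hp⟩)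
      · exact ⟨Int.emod_nonneg m hv.ne', Int.emod_lt_of_pos m hv⟩
      · exact hx.1 p hp
    · rintro ⟨s, e'⟩ hq
      obtain ⟨w', rfl⟩ : ∃ w', w = (s, e') :: w' := by
        cases w <;> simp_all
      cases e <;> cases e' <;> simp_all

lemma push_not_push (hc : 0 < c) (hd : 0 < d) (e : Bool) {x : List Letter × ℤ}
    (hx : IsReduced c d x.1) : push c d (!e) (push c d e x) = x := by
  obtain ⟨w, m⟩ := x
  have hu := modulus_pos hc hd (!e)
  have hv := modulus_pos hc hd e
  by_cases hcancel : ∃ s w', w = (s, !e) :: w' ∧ m % modulus c d e = 0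
  · obtain ⟨s, w', rfl, hm⟩ := hcancel
    obtain ⟨hs₀, hs⟩ := hx.1 _ List.mem_cons_self
    have hmod : (s + modulus c d (!e) * (m / modulus c d e)) % modulus c d (!e) = s := by
      rw [Int.add_mul_emod_self_left, Int.emod_eq_of_lt hs₀ hs]
    have hdiv : (s + modulus c d (!e) * (m / modulus c d e)) / modulus c d (!e) =
        m / modulus c d e := by
      rw [Int.add_mul_ediv_left _ _ hu.ne', Int.ediv_eq_zero_of_lt hs₀ hs, zero_add]
    rw [push_cons_of_cancel rfl hm, push_of_not_cancel, hmod, hdiv, Bool.not_not,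
      Int.mul_ediv_cancel' (Int.dvd_of_emod_eq_zero hm)]
    rintro s' w'' rfl
    rw [hmod]
    -- a zero digit right after a letter of the opposite sign would be a pinch in `w`
    rintro rfl
    have := (List.isChain_cons_cons.1 hx.2).1
    cases e <;> simp_all
  · push Not at hcancel
    rw [push_of_not_cancel hcancel, push_cons_of_cancel (Bool.not_not e).symm
      (Int.mul_emod_right _ _), Int.mul_ediv_cancel_left _ hu.ne', Bool.not_not,
      Int.emod_add_mul_ediv]

lemma push_add_modulus (hc : 0 < c) (hd : 0 < d) (e : Bool) (w : List Letter) (m : ℤ) :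
    push c d e (w, m + modulus c d e) =
      ((push c d e (w, m)).1, (push c d e (w, m)).2 + modulus c d (!e)) := by
  have hv := modulus_pos hc hd e
  have hmod : (m + modulus c d e) % modulus c d e = m % modulus c d e := Int.add_emod_right _ _
  have hdiv : (m + modulus c d e) / modulus c d e = m / modulus c d e + 1 := by
    simpa using Int.add_mul_ediv_right m 1 hv.ne'
  match w with
  | [] => simp only [push, hmod, hdiv, mul_add, mul_one]
  | (s, e') :: w' =>
    simp only [push, hmod, hdiv]
    split_ifs <;> simp [mul_add, add_assoc]

def pushPerm (hc : 0 < c) (hd : 0 < d) (e : Bool) : Equiv.Perm (ReducedForm c d) where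
  toFun x := ⟨push c d e x.1, isReduced_push hc hd e x.2⟩
  invFun x := ⟨push c d (!e) x.1, isReduced_push hc hd (!e) x.2⟩
  left_inv x := Subtype.ext (push_not_push hc hd e x.2)
  right_inv x := Subtype.ext (by simpa using push_not_push hc hd (!e) x.2)

def shiftPerm : Equiv.Perm (ReducedForm c d) where
  toFun x := ⟨(x.1.1, x.1.2 + 1), x.2⟩
  invFun x := ⟨(x.1.1, x.1.2 - 1), x.2⟩
  left_inv x := Subtype.ext (by simp)
  right_inv x := Subtype.ext (by simp)

lemma shiftPerm_apply (x : ReducedForm c d) : (shiftPerm x).1 = (x.1.1, x.1.2 + 1) := rfl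

lemma pushPerm_apply (hc : 0 < c) (hd : 0 < d) (e : Bool) (x : ReducedForm c d) :
    (pushPerm hc hd e x).1 = push c d e x.1 := rfl

lemma shiftPerm_pow_apply (n : ℕ) (x : ReducedForm c d) :
    ((shiftPerm ^ n : Equiv.Perm (ReducedForm c d)) x).1 = (x.1.1, x.1.2 + n) := by
  induction n with
  | zero => simp
  | succ n ih =>
    rw [pow_succ', Equiv.Perm.mul_apply, shiftPerm_apply, ih, Nat.cast_succ, add_assoc]

lemma shiftPerm_pow_mul_pushPerm (hc : 0 < c) (hd : 0 < d) :
    shiftPerm ^ c * pushPerm hc hd true = pushPerm hc hd true * shiftPerm ^ d := by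
  ext1 x
  apply Subtype.ext
  rw [Equiv.Perm.mul_apply, Equiv.Perm.mul_apply, shiftPerm_pow_apply, pushPerm_apply,
    pushPerm_apply, shiftPerm_pow_apply]
  exact (push_add_modulus hc hd true x.1.1 x.1.2).symm

noncomputable def rightAct (hc : 0 < c) (hd : 0 < d) :
    Grp c d →* (Equiv.Perm (ReducedForm c d))ᵐᵒᵖ :=
  PresentedGroup.toGroup (f := fun e => if e then .op (pushPerm hc hd true) else .op shiftPerm) <| by
    rintro r rfl
    simp only [map_mul, map_pow, map_inv, FreeGroup.lift_apply_of, if_true, mul_inv_eq_one]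
    apply MulOpposite.unop_injective
    simp [shiftPerm_pow_mul_pushPerm]

noncomputable def act (hc : 0 < c) (hd : 0 < d) (g : Grp c d) (x : ReducedForm c d) :
    ReducedForm c d :=
  (rightAct hc hd g).unop x

lemma act_mul (hc : 0 < c) (hd : 0 < d) (g h : Grp c d) (x : ReducedForm c d) :
    act hc hd (g * h) x = act hc hd h (act hc hd g x) := by
  simp [act]

lemma act_a (hc : 0 < c) (hd : 0 < d) (x : ReducedForm c d) :
    (act hc hd (a c d) x).1 = push c d true x.1 := by
  simp only [act, a, rightAct, PresentedGroup.toGroup.of, if_true, MulOpposite.unop_op]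
  rfl

lemma act_b_pow (hc : 0 < c) (hd : 0 < d) (n : ℕ) (x : ReducedForm c d) :
    (act hc hd (b c d ^ n) x).1 = (x.1.1, x.1.2 + n) := by
  simp [act, b, rightAct, shiftPerm_pow_apply]

def digitLetter (i : Fin d) : Letter := ((i : ℤ), true)

def emptyForm : ReducedForm c d := ⟨([], 0), by simp [IsReduced]⟩

lemma act_wordStem_emptyForm (hc : 0 < c) (hd : 0 < d) (l : List (Fin d)) :
    (act hc hd (wordStem c d l) emptyForm).1 = ((l.map digitLetter).reverse, 0) := by
  induction l using List.reverseRecOn with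
  | nil => simp only [wordStem, act, map_one, MulOpposite.unop_one]; rfl
  | append_singleton l i ih =>
    have hi₀ : (0 : ℤ) ≤ (i : ℕ) := by positivity
    have hi : ((i : ℕ) : ℤ) < modulus c d true := by simp [modulus]
    rw [wordStem_append_singleton, act_mul, act_mul, act_a, act_b_pow, ih, zero_add,
      push_of_not_cancel, Int.emod_eq_of_lt hi₀ hi, Int.ediv_eq_zero_of_lt hi₀ hi]
    · simp [digitLetter]
    · intro s w hw
      have hmem := List.mem_cons_self (a := (s, !true)) (l := w)
      rw [← hw] at hmem
      simp [digitLetter] at hmem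

lemma wordStem_mul_b_pow_injective (hc : 0 < c) (hd : 0 < d) {l l' : List (Fin d)} {t t' : ℕ}
    (h : wordStem c d l * b c d ^ t = wordStem c d l' * b c d ^ t') : l = l' ∧ t = t' := by
  have h' := congrArg (fun g => (act hc hd g emptyForm).1) h
  simp only [act_mul, act_b_pow, act_wordStem_emptyForm, Prod.mk.injEq, List.reverse_inj] at h'
  refine ⟨List.map_injective_iff.2 (fun i j hij => ?_) h'.1, by simpa using h'.2⟩
  simp only [digitLetter, Prod.mk.injEq] at hij
  exact Fin.ext (by exact_mod_cast hij.1)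

lemma stem_wordStem_mul_b_pow (hc : 0 < c) (hd : 0 < d) (l : List (Fin d)) (t : ℕ) :
    stem c d (wordStem c d l * b c d ^ t) = wordStem c d l := by
  have hex : ∃ p : List (Fin d) × ℕ, wordStem c d l * b c d ^ t = wordStem c d p.1 * b c d ^ p.2 :=
    ⟨(l, t), rfl⟩
  rw [stem, nf, dif_pos hex, ← (wordStem_mul_b_pow_injective hc hd hex.choose_spec).1]

lemma eq_stem_mul_b_pow (hc : 0 < c) (hd : 0 < d) {x : Grp c d} (hx : x ∈ P c d) :
    ∃ t : ℕ, x = stem c d x * b c d ^ t := by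
  obtain ⟨l, t, rfl⟩ := exists_eq_wordStem_mul_b_pow c d hd hx
  exact ⟨t, by rw [stem_wordStem_mul_b_pow hc hd]⟩

lemma stem_mul_b_pow (hc : 0 < c) (hd : 0 < d) {x : Grp c d} (hx : x ∈ P c d) (n : ℕ) :
    stem c d (x * b c d ^ n) = stem c d x := by
  obtain ⟨l, t, rfl⟩ := exists_eq_wordStem_mul_b_pow c d hd hx
  rw [mul_assoc, ← pow_add, stem_wordStem_mul_b_pow hc hd, stem_wordStem_mul_b_pow hc hd]

/-- For all x, y ∈ P, stem(x·stem(y)) = stem(x·y).  Moreover, if t, s ∈ ℕ are such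
that y = stem(y)·b^t and x·stem(y) = stem(x·stem(y))·b^s, then x·y = stem(x·y)·b^(s+t). -/
theorem statement0 (c d : ℕ) (hc : 0 < c) (hd : 0 < d)
    (x y : Grp c d) (hx : x ∈ P c d) (hy : y ∈ P c d) :
    stem c d (x * stem c d y) = stem c d (x * y) ∧
      ∀ t s : ℕ, y = stem c d y * b c d ^ t →
        x * stem c d y = stem c d (x * stem c d y) * b c d ^ s →
        x * y = stem c d (x * y) * b c d ^ (s + t) := by
  obtain ⟨t₀, hy₀⟩ := eq_stem_mul_b_pow hc hd hy
  have hxsy : x * stem c d y ∈ P c d := mul_mem hx (wordStem_mem_P c d _)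
  have hstem : stem c d (x * stem c d y) = stem c d (x * y) := by
    rw [← stem_mul_b_pow hc hd hxsy t₀, mul_assoc, ← hy₀]
  refine ⟨hstem, fun t s hyt hxs => ?_⟩
  rw [← hstem, pow_add, ← mul_assoc, ← hxs, mul_assoc, ← hyt]

end BSpaper
end

section
/- For every k ∈ ℕ and every m ∈ ℕ, the map h_{k,m} : Σ_k → Σ_k given by h_{k,m}(x) = stem(b^m·x) is well defined (i.e. stem(b^m·x) again lies in Σ_k) and is a bijection of Σ_k onto Σ_k. -/
open scoped Classical

/-!
`BS(c,d)` maps to the HNN extension of `ℤ` along `c n ↦ d n` by `a ↦ t`, `b ↦ 1`. In that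
extension a positive word `x₀ t x₁ t ⋯ t g` is a reduced word, so by the normal form theorem for
HNN extensions two such words with letters `xᵢ ∈ [0, d)` agree only if their letters agree; hence
normal forms in `BS(c,d)` are unique and `stem (wordStem l * b^n) = wordStem l`.

Pushing `b^m` to the right through a stem of height `k` with `b^d a = a b^c` produces a stem of
height `k`, so `x ↦ stem (b^m x)` maps the finite set `Σ_k` into itself. It is injective: if
`b^m x = s b^n` and `b^m y = s b^n'` then `x b^n' = y b^n`, and uniqueness of normal forms gives
`x = y`. An injective self-map of a finite set is a bijection.
-/

namespace HNNExtension

variable {G : Type*} [Group G] {A B : Subgroup G} (φ : A ≃* B)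

def positiveWord (l : List G) (g : G) : HNNExtension G A B φ :=
  (l.map fun x => of x * t).prod * of g

variable {φ}

theorem length_eq_and_inv_mul_mem_of_prod_eq {g g' : G} {l l' : List G}
    (h : (of g * (l.map (t * of ·)).prod : HNNExtension G A B φ) =
      of g' * (l'.map (t * of ·)).prod) :
    l.length = l'.length ∧ (l ≠ [] → g⁻¹ * g' ∈ B) := by
  let w : G → List G → NormalWord.ReducedWord G A B := fun g l =>
    ⟨g, l.map ((1 : ℤˣ), ·),
      List.isChain_map _ |>.2 (List.pairwise_of_forall fun _ _ _ => rfl).isChain⟩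
  have hw : ∀ g l, (w g l).prod φ = of g * (l.map (t * of ·)).prod := by
    intro g l
    simp [w, NormalWord.ReducedWord.prod, Function.comp_def]
  obtain ⟨hfst, hhead⟩ := ReducedWord.map_fst_eq_and_of_prod_eq φ
    (w₁ := w g l) (w₂ := w g' l') (by rw [hw, hw, h])
  refine ⟨by simpa [w] using congrArg List.length hfst, fun hl => ?_⟩
  obtain ⟨x, l, rfl⟩ := List.exists_cons_of_ne_nil hl
  simpa [w] using hhead 1

theorem positiveWord_nil (g : G) :
    positiveWord φ [] g = of g * (([] : List G).map (t * of ·)).prod := by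
  simp [positiveWord]

theorem positiveWord_cons (x : G) (l : List G) (g : G) :
    positiveWord φ (x :: l) g = of x * ((l ++ [g]).map (t * of ·)).prod := by
  induction l generalizing x with
  | nil => simp [positiveWord, mul_assoc]
  | cons y l ih =>
    simp only [positiveWord, List.map_cons, List.prod_cons, List.cons_append] at ih ⊢
    rw [mul_assoc, mul_assoc, ih y]
    group

theorem positiveWord_injective {S : Set G} (hS : ∀ x ∈ S, ∀ y ∈ S, x⁻¹ * y ∈ B → x = y)
    {l l' : List G} {g g' : G} (hl : ∀ x ∈ l, x ∈ S) (hl' : ∀ x ∈ l', x ∈ S)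
    (h : positiveWord φ l g = positiveWord φ l' g') : l = l' ∧ g = g' := by
  induction l generalizing l' with
  | nil =>
    cases l' with
    | nil => exact ⟨rfl, of_injective φ (by simpa [positiveWord] using h)⟩
    | cons x' l' =>
      rw [positiveWord_nil, positiveWord_cons] at h
      simpa using (length_eq_and_inv_mul_mem_of_prod_eq h).1
  | cons x l ih =>
    cases l' with
    | nil =>
      rw [positiveWord_nil, positiveWord_cons] at h
      simpa using (length_eq_and_inv_mul_mem_of_prod_eq h).1
    | cons x' l' =>
      have hx : x = x' := by
        rw [positiveWord_cons, positiveWord_cons] at h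
        exact hS x (hl x (by simp)) x' (hl' x' (by simp))
          ((length_eq_and_inv_mul_mem_of_prod_eq h).2 (by simp))
      subst hx
      simp only [positiveWord, List.map_cons, List.prod_cons, mul_assoc, mul_right_inj] at h
      obtain ⟨rfl, rfl⟩ := ih (l' := l') (fun y hy => hl y (.tail _ hy))
        (fun y hy => hl' y (.tail _ hy)) (by simpa only [positiveWord, ← mul_assoc] using h)
      exact ⟨rfl, rfl⟩

end HNNExtension

namespace BSpaper

open Multiplicative HNNExtension

variable {c d : ℕ}

theorem powMonoidHom_injective {n : ℕ} (hn : n ≠ 0) :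
    Function.Injective (powMonoidHom n : Multiplicative ℤ →* Multiplicative ℤ) :=
  pow_left_injective hn

noncomputable def powRangeEquiv (hc : c ≠ 0) (hd : d ≠ 0) :
    (powMonoidHom c : Multiplicative ℤ →* Multiplicative ℤ).range ≃*
      (powMonoidHom d : Multiplicative ℤ →* Multiplicative ℤ).range :=
  (MonoidHom.ofInjective (powMonoidHom_injective hc)).symm.trans
    (MonoidHom.ofInjective (powMonoidHom_injective hd))

theorem powRangeEquiv_apply_pow (hc : c ≠ 0) (hd : d ≠ 0) (x : Multiplicative ℤ) :
    (powRangeEquiv hc hd ⟨x ^ c, x, rfl⟩ : Multiplicative ℤ) = x ^ d := by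
  have : (MonoidHom.ofInjective (powMonoidHom_injective hc)).symm ⟨x ^ c, x, rfl⟩ = x :=
    (MulEquiv.symm_apply_eq _).2
      (Subtype.ext (MonoidHom.ofInjective_apply (powMonoidHom_injective hc)).symm)
  simp only [powRangeEquiv, MulEquiv.trans_apply, this, MonoidHom.ofInjective_apply]
  rfl

abbrev gen : Multiplicative ℤ := ofAdd 1

theorem gen_pow_injective : Function.Injective (gen ^ · : ℕ → Multiplicative ℤ) :=
  fun i j h => by simpa using congrArg toAdd h

theorem t_mul_of_pow (hc : c ≠ 0) (hd : d ≠ 0) :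
    (t * of gen ^ c : HNNExtension _ _ _ (powRangeEquiv hc hd)) = of gen ^ d * t := by
  simpa [powRangeEquiv_apply_pow] using t_mul_of (φ := powRangeEquiv hc hd) ⟨gen ^ c, gen, rfl⟩

noncomputable def toHNN (hc : c ≠ 0) (hd : d ≠ 0) :
    Grp c d →* HNNExtension _ _ _ (powRangeEquiv hc hd) :=
  PresentedGroup.toGroup (f := fun x => if x then t else of gen) <| by
    rintro r rfl
    simp [t_mul_of_pow]

theorem toHNN_a (hc : c ≠ 0) (hd : d ≠ 0) : toHNN hc hd (a c d) = t :=
  PresentedGroup.toGroup.of _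

theorem toHNN_b (hc : c ≠ 0) (hd : d ≠ 0) : toHNN hc hd (b c d) = of gen :=
  PresentedGroup.toGroup.of _

theorem toHNN_wordStem_mul_pow (hc : c ≠ 0) (hd : d ≠ 0) (l : List (Fin d)) (n : ℕ) :
    toHNN hc hd (wordStem c d l * b c d ^ n) =
      positiveWord _ (l.map fun i : Fin d => gen ^ (i : ℕ)) (gen ^ n) := by
  induction l with
  | nil => simp [wordStem, positiveWord, toHNN_b]
  | cons i l ih =>
    simp only [wordStem, positiveWord, List.map_cons, List.prod_cons, mul_assoc, map_mul,
      map_pow, toHNN_a, toHNN_b] at ih ⊢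
    rw [ih]

theorem eq_of_gen_pow_inv_mul_mem_range {i j : ℕ} (hi : i < d) (hj : j < d)
    (h : (gen ^ i)⁻¹ * gen ^ j ∈ (powMonoidHom d : Multiplicative ℤ →* Multiplicative ℤ).range) :
    i = j := by
  obtain ⟨z, hz⟩ := h
  have hdvd : (d : ℤ) ∣ (j : ℤ) - i :=
    ⟨z.toAdd, by simpa [sub_eq_neg_add] using congrArg toAdd hz.symm⟩
  have := Int.eq_zero_of_abs_lt_dvd hdvd (by rw [abs_lt]; omega)
  omega

theorem wordStem_mul_pow_inj (hc : c ≠ 0) (hd : d ≠ 0) {l l' : List (Fin d)} {n n' : ℕ} :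
    wordStem c d l * b c d ^ n = wordStem c d l' * b c d ^ n' ↔ l = l' ∧ n = n' := by
  refine ⟨fun h => ?_, by rintro ⟨rfl, rfl⟩; rfl⟩
  have h := congrArg (toHNN hc hd) h
  rw [toHNN_wordStem_mul_pow, toHNN_wordStem_mul_pow] at h
  obtain ⟨hl, hn⟩ := positiveWord_injective (S := Set.range fun i : Fin d => gen ^ (i : ℕ))
    (by
      rintro _ ⟨i, rfl⟩ _ ⟨j, rfl⟩ hij
      rw [Fin.ext (eq_of_gen_pow_inv_mul_mem_range i.2 j.2 hij)])
    (by simp) (by simp) h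
  exact ⟨List.map_injective_iff.2 (fun i j hij => Fin.ext (gen_pow_injective hij)) hl,
    gen_pow_injective hn⟩

theorem a_mul_b_pow : a c d * b c d ^ c = b c d ^ d * a c d := by
  have h := PresentedGroup.one_of_mem (rels := rels c d) rfl
  simp only [map_mul, map_inv, map_pow] at h
  exact mul_inv_eq_one.1 h

theorem b_pow_mul_mul_a (q : ℕ) : b c d ^ (d * q) * a c d = a c d * b c d ^ (c * q) := by
  simpa only [pow_mul] using ((SemiconjBy.pow_right a_mul_b_pow q).eq).symm

/-- Carrying in base `d`: `b^{m+s} a = b^{(m+s) % d} a b^{c ((m+s) / d)}`. -/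
theorem exists_b_pow_mul_wordStem (c : ℕ) (hd : 0 < d) (m : ℕ) (l : List (Fin d)) :
    ∃ (l' : List (Fin d)) (n : ℕ), l'.length = l.length ∧
      b c d ^ m * wordStem c d l = wordStem c d l' * b c d ^ n := by
  induction l generalizing m with
  | nil => exact ⟨[], m, rfl, by simp [wordStem]⟩
  | cons s l ih =>
    set r := (m + s) % d
    set q := (m + s) / d
    obtain ⟨l', n, hlen, h⟩ := ih (c * q)
    refine ⟨⟨r, Nat.mod_lt _ hd⟩ :: l', n, by simp [hlen], ?_⟩
    calc b c d ^ m * wordStem c d (s :: l)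
        = b c d ^ r * (b c d ^ (d * q) * a c d) * wordStem c d l := by
          rw [wordStem, ← mul_assoc (b c d ^ r), ← pow_add, Nat.mod_add_div, pow_add]
          simp only [mul_assoc]
      _ = b c d ^ r * a c d * (b c d ^ (c * q) * wordStem c d l) := by
          rw [b_pow_mul_mul_a]
          simp only [mul_assoc]
      _ = wordStem c d (⟨r, Nat.mod_lt _ hd⟩ :: l') * b c d ^ n := by
          rw [h, wordStem]
          simp only [mul_assoc]

theorem stem_wordStem_mul_pow (hc : c ≠ 0) (hd : d ≠ 0) (l : List (Fin d)) (n : ℕ) :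
    stem c d (wordStem c d l * b c d ^ n) = wordStem c d l := by
  have h : ∃ p : List (Fin d) × ℕ,
      wordStem c d l * b c d ^ n = wordStem c d p.1 * b c d ^ p.2 := ⟨(l, n), rfl⟩
  rw [stem, nf, dif_pos h]
  exact congrArg (wordStem c d) ((wordStem_mul_pow_inj hc hd).1 h.choose_spec).1.symm

theorem sigmaSet_finite (k : ℕ) : (SigmaSet c d k).Finite :=
  (List.finite_length_eq (Fin d) k).image (wordStem c d)

variable {k : ℕ}

theorem stem_b_pow_mul_mem_sigmaSet (hc : c ≠ 0) (hd : 0 < d) {x : Grp c d}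
    (hx : x ∈ SigmaSet c d k) (m : ℕ) : stem c d (b c d ^ m * x) ∈ SigmaSet c d k := by
  obtain ⟨l, rfl, rfl⟩ := hx
  obtain ⟨l', n, hlen, h⟩ := exists_b_pow_mul_wordStem c hd m l
  rw [h, stem_wordStem_mul_pow hc hd.ne']
  exact ⟨l', hlen, rfl⟩

theorem exists_b_pow_mul_eq_stem_mul (hc : c ≠ 0) (hd : 0 < d) {x : Grp c d}
    (hx : x ∈ SigmaSet c d k) (m : ℕ) :
    ∃ n : ℕ, b c d ^ m * x = stem c d (b c d ^ m * x) * b c d ^ n := by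
  obtain ⟨l, rfl, rfl⟩ := hx
  obtain ⟨l', n, -, h⟩ := exists_b_pow_mul_wordStem c hd m l
  exact ⟨n, by rw [h, stem_wordStem_mul_pow hc hd.ne']⟩

theorem eq_of_mul_b_pow_eq (hc : c ≠ 0) (hd : d ≠ 0) {x y : Grp c d} (hx : x ∈ SigmaSet c d k)
    (hy : y ∈ SigmaSet c d k) {n n' : ℕ} (h : x * b c d ^ n = y * b c d ^ n') : x = y := by
  obtain ⟨l, -, rfl⟩ := hx
  obtain ⟨l', -, rfl⟩ := hy
  rw [((wordStem_mul_pow_inj hc hd).1 h).1]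

/-- For every k, m ∈ ℕ, the map x ↦ stem(b^m·x) is a well-defined bijection of Σ_k onto Σ_k. -/
theorem statement1 (c d : ℕ) (hc : 0 < c) (hd : 0 < d) (k m : ℕ) :
    Set.BijOn (fun x => stem c d (b c d ^ m * x)) (SigmaSet c d k) (SigmaSet c d k) := by
  have hmaps : Set.MapsTo (fun x => stem c d (b c d ^ m * x)) (SigmaSet c d k) (SigmaSet c d k) :=
    fun x hx => stem_b_pow_mul_mem_sigmaSet hc.ne' hd hx m
  refine ((sigmaSet_finite k).injOn_iff_bijOn_of_mapsTo hmaps).1 fun x hx y hy hxy => ?_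
  obtain ⟨n, hn⟩ := exists_b_pow_mul_eq_stem_mul hc.ne' hd hx m
  obtain ⟨n', hn'⟩ := exists_b_pow_mul_eq_stem_mul hc.ne' hd hy m
  refine eq_of_mul_b_pow_eq hc.ne' hd.ne' hx hy (n := n') (n' := n)
    (mul_left_cancel (a := b c d ^ m) ?_)
  simp only at hxy
  rw [← mul_assoc, ← mul_assoc, hn, hn', hxy, mul_assoc, mul_assoc, ← pow_add, ← pow_add,
    add_comm]

end BSpaper
end

section
/- Let A be a unital C*-algebra and let U, V ∈ A satisfy U*U = 1 = V*V, V U^c = U^d V, U* V = U^{d-1} V (U*)^c, and V* U^j V = 0 for 1 ≤ j < d. Let s, t ∈ ℕ and let n ∈ ℕ and j with 1 ≤ j ≤ d be the unique integers satisfying s + d = n·d + j. Then (U*)^s V U^t = U^{d-j} V (U*)^{nc - t} if nc > t, and (U*)^s V U^t = U^{d-j} V U^{t - nc} if nc ≤ t. -/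
/-- Let A be a unital C*-algebra and U, V ∈ A isometries with V U^c = U^d V,
U* V = U^(d-1) V (U*)^c, and V* U^j V = 0 for 1 ≤ j < d.  Let s, t ∈ ℕ and let n, j be
the unique integers with 1 ≤ j ≤ d and s + d = n·d + j.  Then
(U*)^s V U^t = U^(d-j) V (U*)^(nc−t) if nc > t, and (U*)^s V U^t = U^(d-j) V U^(t−nc)
if nc ≤ t. -/
theorem statement9 (c d : ℕ) (hc : 0 < c) (hd : 0 < d)
    {A : Type*} [NormedRing A] [StarRing A] [CStarRing A] [CompleteSpace A]
    [NormedAlgebra ℂ A] [StarModule ℂ A]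
    (U V : A) (hU : star U * U = 1) (hV : star V * V = 1)
    (h1 : V * U ^ c = U ^ d * V)
    (h2 : star U * V = U ^ (d - 1) * V * star U ^ c)
    (h3 : ∀ j : ℕ, 1 ≤ j → j < d → star V * U ^ j * V = 0)
    (s t n j : ℕ) (hj1 : 1 ≤ j) (hjd : j ≤ d) (hsd : s + d = n * d + j) :
    (n * c > t → star U ^ s * V * U ^ t = U ^ (d - j) * V * star U ^ (n * c - t)) ∧
      (n * c ≤ t → star U ^ s * V * U ^ t = U ^ (d - j) * V * U ^ (t - n * c)) := by
  have hpow : ∀ a : ℕ, star U ^ a * U ^ a = 1 := by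
    intro a
    induction a with
    | zero => simp
    | succ k ih =>
        rw [pow_succ, pow_succ', mul_assoc, ← mul_assoc (star U), hU, one_mul, ih]
  have hcancel1 : ∀ x y : ℕ, star U ^ (x + y) * U ^ y = star U ^ x := by
    intro x y; rw [pow_add, mul_assoc, hpow y, mul_one]
  have hcancel2 : ∀ x y : ℕ, star U ^ y * U ^ (y + x) = U ^ x := by
    intro x y; rw [pow_add, ← mul_assoc, hpow y, one_mul]
  have key : ∀ s' n' j' : ℕ, 1 ≤ j' → j' ≤ d → s' + d = n' * d + j' →
      star U ^ s' * V = U ^ (d - j') * V * star U ^ (n' * c) := by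
    intro s'
    induction s' with
    | zero =>
        intro n' j' hj1' hjd' hs'
        have hn0 : n' = 0 := by
          rcases Nat.eq_zero_or_pos n' with h | h
          · exact h
          · have : d ≤ n' * d := Nat.le_mul_of_pos_left d h
            omega
        subst hn0
        have : j' = d := by omega
        subst this
        simp
    | succ k ih =>
        intro n' j' hj1' hjd' hs'
        rcases eq_or_lt_of_le hj1' with hj1e | hj2
        · -- j' = 1
          have hn1 : 1 ≤ n' := by
            rcases Nat.eq_zero_or_pos n' with rfl | h
            · simp at hs'; omega
            · exact h
          have hd1 : (n' - 1) * d + d = n' * d := by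
            rw [Nat.sub_mul, one_mul]
            have : d ≤ n' * d := Nat.le_mul_of_pos_left d hn1
            omega
          have hk : k + d = (n' - 1) * d + d := by omega
          have ihk := ih (n' - 1) d hd le_rfl hk
          rw [pow_succ', mul_assoc, ihk]
          simp only [Nat.sub_self, pow_zero, one_mul]
          rw [← mul_assoc, h2, mul_assoc, mul_assoc, ← pow_add]
          have : c + (n' - 1) * c = n' * c := by
            rw [Nat.sub_mul, one_mul]
            have : c ≤ n' * c := Nat.le_mul_of_pos_left c hn1
            omega
          rw [this, ← hj1e, mul_assoc]
        · -- j' ≥ 2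
          have hk : k + d = n' * d + (j' - 1) := by omega
          have ihk := ih n' (j' - 1) (by omega) (by omega) hk
          rw [pow_succ', mul_assoc, ihk]
          have hdj : d - (j' - 1) = (d - j') + 1 := by omega
          rw [hdj, pow_succ', ← mul_assoc, ← mul_assoc,
            ← mul_assoc (star U) U (U ^ (d - j')), hU, one_mul]
  have hkey := key s n j hj1 hjd hsd
  constructor
  · intro ht
    have e1 : star U ^ (n * c) * U ^ t = star U ^ (n * c - t) := by
      have h := hcancel1 (n * c - t) t
      rwa [show n * c - t + t = n * c by omega] at h
    rw [hkey, mul_assoc, e1]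
  · intro ht
    have e1 : star U ^ (n * c) * U ^ t = U ^ (t - n * c) := by
      have h := hcancel2 (t - n * c) (n * c)
      rwa [show n * c + (t - n * c) = t by omega] at h
    rw [hkey, mul_assoc, e1]
end

section
/- Let c, d, t be natural numbers with c ≥ 1 and d ≥ 1 such that d does not divide c. If d^{j+1} divides c^j·t for every j ∈ ℕ, then t = 0. -/
/-!
Write `g = gcd c d`, `c = g c₁`, `d = g d₁`. Cancelling `g ^ j` in `d ^ (j + 1) ∣ c ^ j t` leaves
`g d₁ ^ (j + 1) ∣ c₁ ^ j t`, and since `c₁` is coprime to `d₁` this gives `d₁ ^ (j + 1) ∣ t` for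
every `j`. As `d ∤ c` forces `d₁ ≠ 1`, only `t = 0` is divisible by all powers of `d₁`.
-/

namespace Nat

theorem eq_zero_of_forall_pow_dvd {a t : ℕ} (ha : a ≠ 1) (h : ∀ n, a ^ n ∣ t) : t = 0 := by
  by_contra ht
  obtain ⟨n, hn⟩ := Nat.finiteMultiplicity_iff.2 ⟨ha, Nat.pos_of_ne_zero ht⟩
  exact hn (h (n + 1))

theorem div_gcd_pow_succ_dvd {c d t j : ℕ} (hc : c ≠ 0) (h : d ^ (j + 1) ∣ c ^ j * t) :
    (d / c.gcd d) ^ (j + 1) ∣ t := by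
  set g := c.gcd d
  have hg : 0 < g := Nat.gcd_pos_of_pos_left d (Nat.pos_of_ne_zero hc)
  have hcg : c = g * (c / g) := (Nat.mul_div_cancel' (Nat.gcd_dvd_left c d)).symm
  have hdg : d = g * (d / g) := (Nat.mul_div_cancel' (Nat.gcd_dvd_right c d)).symm
  have hcancel : g ^ j * (g * (d / g) ^ (j + 1)) ∣ g ^ j * ((c / g) ^ j * t) := by
    rw [hcg, hdg, mul_pow, mul_pow] at h
    convert h using 1 <;> ring
  have hreduced : (d / g) ^ (j + 1) ∣ (c / g) ^ j * t :=
    dvd_of_mul_left_dvd ((mul_dvd_mul_iff_left (pow_pos hg j).ne').1 hcancel)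
  exact ((Nat.coprime_div_gcd_div_gcd hg).symm.pow (j + 1) j).dvd_of_dvd_mul_left hreduced

theorem div_gcd_ne_one_of_not_dvd {c d : ℕ} (hnd : ¬ d ∣ c) : d / c.gcd d ≠ 1 := by
  intro h1
  have hdg : d = c.gcd d := by
    simpa [h1] using (Nat.mul_div_cancel' (Nat.gcd_dvd_right c d)).symm
  exact hnd (hdg ▸ Nat.gcd_dvd_left c d)

end Nat

theorem statement12_general (c d t : ℕ) (hnd : ¬ d ∣ c)
    (h : ∀ j : ℕ, d ^ (j + 1) ∣ c ^ j * t) : t = 0 := by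
  have hc : c ≠ 0 := by
    rintro rfl
    exact hnd (dvd_zero d)
  refine Nat.eq_zero_of_forall_pow_dvd (Nat.div_gcd_ne_one_of_not_dvd hnd) fun n => ?_
  cases n with
  | zero => exact one_dvd t
  | succ j => exact Nat.div_gcd_pow_succ_dvd hc (h j)

/-- Let c, d, t be natural numbers with c ≥ 1 and d ≥ 1 such that d does not divide c.
If d^(j+1) divides c^j·t for every j ∈ ℕ, then t = 0. -/
theorem statement12 (c d t : ℕ) (hc : 1 ≤ c) (hd : 1 ≤ d) (hnd : ¬ d ∣ c)
    (h : ∀ j : ℕ, d ^ (j + 1) ∣ c ^ j * t) : t = 0 :=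
  statement12_general c d t hnd h
end
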